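/- In local coordinates, the operator Φ₁(φ,ψ)(X,Y,Z) := (L_{φ(X)}ψ − L_X(ψ∘₁φ))(Y,Z) − (L_{φ(Z)}ψ − L_Z(ψ∘₁φ))(Y,X) + (ψ∘₂φ − ψ∘₁φ)(Y,[X,Z]) has components Φ₁_{ijk} = φ^m_i ∂_m ψ_{jk} + φ^m_j(∂_k ψ_{mi} − ∂_i ψ_{mk}) − φ^m_k ∂_m ψ_{ji} + ψ_{mi}(∂_k φ^m_j − ∂_j φ^m_k) + ψ_{jm}(∂_k φ^m_i − ∂_i φ^m_k) + ψ_{mk}(∂_j φ^m_i − ∂_i φ^m_j), so that Φ₁(φ,ψ)(X,Y,Z) = Φ₁_{ijk} X^i Y^j Z^k. -/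

import Mathlib

open scoped BigOperators

noncomputable section

/-- Points of the model space `ℝ^m`. -/
abbrev Pt (m : ℕ) := Fin m → ℝ
/-- Vector fields (or 1-forms) on `ℝ^m`, given by their components. -/
abbrev VF (m : ℕ) := Pt m → Fin m → ℝ
/-- (0,2)-tensor fields (or (1,1)-tensor fields) on `ℝ^m`, given by components. -/
abbrev T02 (m : ℕ) := Pt m → Fin m → Fin m → ℝ
/-- (0,3)- or (1,2)-tensor fields on `ℝ^m`, given by components. -/
abbrev T3 (m : ℕ) := Pt m → Fin m → Fin m → Fin m → ℝ

variable {m : ℕ}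

/-- `i`-th partial derivative of a scalar function. -/
def pd (i : Fin m) (f : Pt m → ℝ) (x : Pt m) : ℝ :=
  fderiv ℝ f x (Pi.single i 1)

/-- Derivative of a function `f` along a vector field `X`. -/
def Xdot (X : VF m) (f : Pt m → ℝ) (x : Pt m) : ℝ :=
  ∑ k, X x k * pd k f x

/-- Lie bracket of vector fields, in components. -/
def lieB (X Y : VF m) : VF m := fun x i =>
  ∑ k, (X x k * pd k (fun y => Y y i) x - Y x k * pd k (fun y => X y i) x)

/-- Evaluation `ψ(X)` of a 1-form on a vector field. -/
def ev1 (ψ X : VF m) (x : Pt m) : ℝ := ∑ i, ψ x i * X x i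

/-- Exterior derivative of a function, as a 1-form. -/
def dF (f : Pt m → ℝ) : VF m := fun x i => pd i f x

/-- Exterior derivative of a 1-form, as a 2-form: `(dψ)_{ij} = ∂_i ψ_j - ∂_j ψ_i`. -/
def d2 (ψ : VF m) : T02 m := fun x i j =>
  pd i (fun y => ψ y j) x - pd j (fun y => ψ y i) x

/-- Evaluation of a (0,2)-tensor field on two vector fields. -/
def ev2 (T : T02 m) (X Y : VF m) (x : Pt m) : ℝ :=
  ∑ i, ∑ j, T x i j * X x i * Y x j

/-- Lie derivative of a 1-form `ψ` along `X`, evaluated on `Y`: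
`(L_X ψ)(Y) = X·(ψ(Y)) - ψ([X,Y])`. -/
def lie1 (X ψ Y : VF m) (x : Pt m) : ℝ :=
  Xdot X (ev1 ψ Y) x - ev1 ψ (lieB X Y) x

/-- Lie derivative of a (0,2)-tensor field `T` along `X`, evaluated on `Y, Z`:
`(L_X T)(Y,Z) = X·T(Y,Z) - T([X,Y],Z) - T(Y,[X,Z])`. -/
def lie2 (X : VF m) (T : T02 m) (Y Z : VF m) (x : Pt m) : ℝ :=
  Xdot X (ev2 T Y Z) x - ev2 T (lieB X Y) Z x - ev2 T Y (lieB X Z) x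

/-- Application of a (1,1)-tensor field to a vector field: `(φX)^i = φ^i_j X^j`. -/
def appT (φ : T02 m) (X : VF m) : VF m := fun x i => ∑ j, φ x i j * X x j

/-- `(ψ∘₁φ)(X,Y) = ψ(φX,Y)`, in components `(ψ∘₁φ)_{ij} = ψ_{aj} φ^a_i`. -/
def comp1 (ψ φ : T02 m) : T02 m := fun x i j => ∑ a, ψ x a j * φ x a i

/-- `(ψ∘₂φ)(X,Y) = ψ(X,φY)`, in components `(ψ∘₂φ)_{ij} = ψ_{ia} φ^a_j`. -/
def comp2 (ψ φ : T02 m) : T02 m := fun x i j => ∑ a, ψ x i a * φ x a j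

/-- Composition `ψ∘φ` of a 1-form with a (1,1)-tensor field:  `(ψ∘φ)_i = ψ_a φ^a_i`. -/
def compF (ψ : VF m) (φ : T02 m) : VF m := fun x i => ∑ a, ψ x a * φ x a i

/-- Exterior derivative of a 2-form `T`, as a 3-form:
`(dT)_{ijk} = ∂_i T_{jk} - ∂_j T_{ik} + ∂_k T_{ij}`. -/
def d3 (T : T02 m) : T3 m := fun x i j k =>
  pd i (fun y => T y j k) x - pd j (fun y => T y i k) x + pd k (fun y => T y i j) x

/-- Evaluation of a (0,3)-tensor field on three vector fields. -/
def ev3 (U : T3 m) (X Y Z : VF m) (x : Pt m) : ℝ :=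
  ∑ i, ∑ j, ∑ k, U x i j k * X x i * Y x j * Z x k

/-- Pointwise sum of vector fields. -/
def addV (X Y : VF m) : VF m := fun x i => X x i + Y x i

/-- Pointwise multiplication of a vector field by a function. -/
def smulV (f : Pt m → ℝ) (X : VF m) : VF m := fun x i => f x * X x i


/-- The first operator of Theorem 3.4:
`Φ₁(φ,ψ)(X,Y,Z) = (L_{φ(X)}ψ − L_X(ψ∘₁φ))(Y,Z) − (L_{φ(Z)}ψ − L_Z(ψ∘₁φ))(Y,X)
  + (ψ∘₂φ)(Y,[X,Z]) − (ψ∘₁φ)(Y,[X,Z])`. -/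
def Phi1 (φ ψ : T02 m) (X Y Z : VF m) (x : Pt m) : ℝ :=
  (lie2 (appT φ X) ψ Y Z x - lie2 X (comp1 ψ φ) Y Z x)
  - (lie2 (appT φ Z) ψ Y X x - lie2 Z (comp1 ψ φ) Y X x)
  + ev2 (comp2 ψ φ) Y (lieB X Z) x - ev2 (comp1 ψ φ) Y (lieB X Z) x

/-- The coordinate components of `Φ₁`:
`Φ₁_{ijk} = φ^m_i ∂_m ψ_{jk} + φ^m_j(∂_k ψ_{mi} − ∂_i ψ_{mk}) − φ^m_k ∂_m ψ_{ji}
 + ψ_{mi}(∂_k φ^m_j − ∂_j φ^m_k) + ψ_{jm}(∂_k φ^m_i − ∂_i φ^m_k)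
 + ψ_{mk}(∂_j φ^m_i − ∂_i φ^m_j)`. -/
def Phi1C (φ ψ : T02 m) (x : Pt m) (i j k : Fin m) : ℝ :=
  ∑ n, (φ x n i * pd n (fun y => ψ y j k) x
      + φ x n j * (pd k (fun y => ψ y n i) x - pd i (fun y => ψ y n k) x)
      - φ x n k * pd n (fun y => ψ y j i) x
      + ψ x n i * (pd k (fun y => φ y n j) x - pd j (fun y => φ y n k) x)
      + ψ x j n * (pd k (fun y => φ y n i) x - pd i (fun y => φ y n k) x)
      + ψ x n k * (pd j (fun y => φ y n i) x - pd i (fun y => φ y n j) x))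


/-! In coordinates the Lie derivative of a (0,2)-tensor field is
`(L_U T)_{jk} = U^p ∂_p T_{jk} + T_{pk} ∂_j U^p + T_{jp} ∂_k U^p`: the derivatives of the arguments
cancel against the brackets. Taking `U = φX, T = ψ` and `U = X, T = ψ∘₁φ`, the terms `ψ(φ ∇_Y X, Z)`
cancel, and `(L_{φX}ψ − L_X(ψ∘₁φ))(Y,Z) = H(X,Y,Z) + (ψ∘₂φ − ψ∘₁φ)(Y, ∇_Z X)` for a tensor `H`,
where `∇` is the flat connection. As `[X,Z] = ∇_X Z − ∇_Z X`, the last term of `Φ₁` absorbs both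
derivative terms, so `Φ₁(X,Y,Z) = H(X,Y,Z) − H(Z,Y,X)`, and `Φ₁_{ijk} = H_{ijk} − H_{kji}`. -/

open Finset

section Calculus

variable {x : Pt m}

lemma DifferentiableAt.apply₂ {T : T02 m} (hT : DifferentiableAt ℝ T x) (j k : Fin m) :
    DifferentiableAt ℝ (fun y => T y j k) x :=
  differentiableAt_pi.1 (differentiableAt_pi.1 hT j) k

lemma pd_mul {f g : Pt m → ℝ} (hf : DifferentiableAt ℝ f x) (hg : DifferentiableAt ℝ g x)
    (i : Fin m) : pd i (fun y => f y * g y) x = pd i f x * g x + f x * pd i g x := by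
  simp only [pd, fderiv_fun_mul hf hg, add_apply, smul_apply, smul_eq_mul]
  ring

lemma pd_sum {ι : Type*} {s : Finset ι} {f : ι → Pt m → ℝ}
    (hf : ∀ a ∈ s, DifferentiableAt ℝ (f a) x) (i : Fin m) :
    pd i (fun y => ∑ a ∈ s, f a y) x = ∑ a ∈ s, pd i (f a) x := by
  simp only [pd, fderiv_fun_sum hf, _root_.sum_apply]

lemma Xdot_mul (U : VF m) {f g : Pt m → ℝ} (hf : DifferentiableAt ℝ f x)
    (hg : DifferentiableAt ℝ g x) :
    Xdot U (fun y => f y * g y) x = Xdot U f x * g x + f x * Xdot U g x := by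
  simp only [Xdot, pd_mul hf hg, mul_add, sum_add_distrib, sum_mul, mul_sum]
  congr 1 <;> exact sum_congr rfl fun _ _ => by ring

lemma Xdot_sum (U : VF m) {ι : Type*} {s : Finset ι} {f : ι → Pt m → ℝ}
    (hf : ∀ a ∈ s, DifferentiableAt ℝ (f a) x) :
    Xdot U (fun y => ∑ a ∈ s, f a y) x = ∑ a ∈ s, Xdot U (f a) x := by
  simp only [Xdot, pd_sum hf, mul_sum]
  exact sum_comm

lemma Xdot_ev2 (U : VF m) {T : T02 m} {Y Z : VF m} (hT : DifferentiableAt ℝ T x)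
    (hY : DifferentiableAt ℝ Y x) (hZ : DifferentiableAt ℝ Z x) :
    Xdot U (ev2 T Y Z) x = ∑ j, ∑ k,
      (Xdot U (fun y => T y j k) x * Y x j * Z x k
        + T x j k * Xdot U (fun y => Y y j) x * Z x k
        + T x j k * Y x j * Xdot U (fun y => Z y k) x) := by
  have hY' (j : Fin m) : DifferentiableAt ℝ (fun y => Y y j) x := differentiableAt_pi.1 hY j
  have hZ' (k : Fin m) : DifferentiableAt ℝ (fun y => Z y k) x := differentiableAt_pi.1 hZ k
  unfold ev2
  rw [Xdot_sum U fun j _ => DifferentiableAt.fun_sum fun k _ =>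
    ((hT.apply₂ j k).fun_mul (hY' j)).fun_mul (hZ' k)]
  refine sum_congr rfl fun j _ => ?_
  rw [Xdot_sum U fun k _ => ((hT.apply₂ j k).fun_mul (hY' j)).fun_mul (hZ' k)]
  refine sum_congr rfl fun k _ => ?_
  rw [Xdot_mul U ((hT.apply₂ j k).fun_mul (hY' j)) (hZ' k), Xdot_mul U (hT.apply₂ j k) (hY' j)]
  ring

lemma lieB_apply (U Y : VF m) (i : Fin m) :
    lieB U Y x i = Xdot U (fun y => Y y i) x - Xdot Y (fun y => U y i) x := by
  simp only [lieB, Xdot, sum_sub_distrib]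

end Calculus

def lie2C (U : VF m) (T : T02 m) : T02 m := fun x j k =>
  Xdot U (fun y => T y j k) x
    + ∑ p, (T x p k * pd j (fun y => U y p) x + T x j p * pd k (fun y => U y p) x)

lemma lie2_eq_ev2_lie2C (U : VF m) {T : T02 m} {Y Z : VF m} {x : Pt m}
    (hT : DifferentiableAt ℝ T x) (hY : DifferentiableAt ℝ Y x) (hZ : DifferentiableAt ℝ Z x) :
    lie2 U T Y Z x = ev2 (lie2C U T) Y Z x := by
  have hYU : ∑ j, ∑ k, T x j k * Xdot Y (fun y => U y j) x * Z x k
      = ∑ j, ∑ k, (∑ p, T x p k * pd j (fun y => U y p) x) * Y x j * Z x k := by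
    simp only [Xdot, mul_sum, sum_mul]
    rw [sum_comm_cycle]
    refine sum_congr rfl fun _ _ => sum_comm.trans (sum_congr rfl fun _ _ =>
      sum_congr rfl fun _ _ => by ring)
  have hZU : ∑ j, ∑ k, T x j k * Y x j * Xdot Z (fun y => U y k) x
      = ∑ j, ∑ k, (∑ p, T x j p * pd k (fun y => U y p) x) * Y x j * Z x k := by
    simp only [Xdot, mul_sum, sum_mul]
    refine sum_congr rfl fun _ _ => sum_comm.trans (sum_congr rfl fun _ _ =>
      sum_congr rfl fun _ _ => by ring)
  simp only [lie2, Xdot_ev2 U hT hY hZ, ev2, lieB_apply, lie2C, add_mul, sum_add_distrib, ← hYU,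
    ← hZU, mul_sub, sub_mul, sum_sub_distrib]
  ring

section Components

variable {φ ψ : T02 m} {X : VF m} {x : Pt m}

lemma pd_appT (hφ : DifferentiableAt ℝ φ x) (hX : DifferentiableAt ℝ X x) (p j : Fin m) :
    pd p (fun y => appT φ X y j) x
      = ∑ i, (pd p (fun y => φ y j i) x * X x i + φ x j i * pd p (fun y => X y i) x) := by
  have hX' (i : Fin m) : DifferentiableAt ℝ (fun y => X y i) x := differentiableAt_pi.1 hX i
  simp only [appT]
  rw [pd_sum fun i _ => (hφ.apply₂ j i).fun_mul (hX' i)]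
  exact sum_congr rfl fun i _ => pd_mul (hφ.apply₂ j i) (hX' i) p

lemma pd_comp1 (hψ : DifferentiableAt ℝ ψ x) (hφ : DifferentiableAt ℝ φ x) (p j k : Fin m) :
    pd p (fun y => comp1 ψ φ y j k) x
      = ∑ n, (pd p (fun y => ψ y n k) x * φ x n j + ψ x n k * pd p (fun y => φ y n j) x) := by
  simp only [comp1]
  rw [pd_sum fun n _ => (hψ.apply₂ n k).fun_mul (hφ.apply₂ n j)]
  exact sum_congr rfl fun n _ => pd_mul (hψ.apply₂ n k) (hφ.apply₂ n j) p

/-- Components `H_{ijk}` of the tensorial part of `L_{φX}ψ − L_X(ψ∘₁φ)`. -/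
def lieDiffC (φ ψ : T02 m) : T3 m := fun x i j k =>
  ∑ n, (φ x n i * pd n (fun y => ψ y j k) x + ψ x n k * pd j (fun y => φ y n i) x
    + ψ x j n * pd k (fun y => φ y n i) x - φ x n j * pd i (fun y => ψ y n k) x
    - ψ x n k * pd i (fun y => φ y n j) x)

lemma lie2C_appT_sub_lie2C_comp1 (hφ : DifferentiableAt ℝ φ x) (hψ : DifferentiableAt ℝ ψ x)
    (hX : DifferentiableAt ℝ X x) (j k : Fin m) :
    lie2C (appT φ X) ψ x j k - lie2C X (comp1 ψ φ) x j k
      = ∑ i, lieDiffC φ ψ x i j k * X x i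
        + ∑ i, (comp2 ψ φ - comp1 ψ φ) x j i * pd k (fun y => X y i) x := by
  have hLφX : lie2C (appT φ X) ψ x j k = ∑ i, ∑ n,
      (φ x n i * X x i * pd n (fun y => ψ y j k) x
        + ψ x n k * (pd j (fun y => φ y n i) x * X x i + φ x n i * pd j (fun y => X y i) x)
        + ψ x j n * (pd k (fun y => φ y n i) x * X x i + φ x n i * pd k (fun y => X y i) x)) := by
    rw [sum_comm]
    simp only [lie2C, Xdot, pd_appT hφ hX]
    simp only [appT, sum_mul, mul_sum, ← sum_add_distrib, add_assoc]
  have hLX : lie2C X (comp1 ψ φ) x j k = ∑ i, ∑ n,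
      (X x i * (pd i (fun y => ψ y n k) x * φ x n j + ψ x n k * pd i (fun y => φ y n j) x)
        + ψ x n k * φ x n i * pd j (fun y => X y i) x
        + ψ x n i * φ x n j * pd k (fun y => X y i) x) := by
    simp only [lie2C, Xdot, pd_comp1 hψ hφ]
    simp only [comp1, sum_mul, mul_sum, ← sum_add_distrib, add_assoc]
  rw [hLφX, hLX]
  simp only [lieDiffC, comp1, comp2, Pi.sub_apply, sum_mul, ← sum_sub_distrib, ← sum_add_distrib]
  exact sum_congr rfl fun _ _ => sum_congr rfl fun _ _ => by ring

end Components

section Assembly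

variable {φ ψ : T02 m} {X Y Z : VF m} {x : Pt m}

def covDeriv (Z X : VF m) : VF m := fun x i => Xdot Z (fun y => X y i) x

lemma lieB_eq_covDeriv_sub (X Z : VF m) : lieB X Z = covDeriv X Z - covDeriv Z X := by
  funext x i
  exact lieB_apply X Z i

lemma ev2_sub_left (A B : T02 m) (Y Z : VF m) (x : Pt m) :
    ev2 (A - B) Y Z x = ev2 A Y Z x - ev2 B Y Z x := by
  simp only [ev2, Pi.sub_apply, sub_mul, sum_sub_distrib]

lemma ev2_sub_right (T : T02 m) (Y Z W : VF m) (x : Pt m) :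
    ev2 T Y (Z - W) x = ev2 T Y Z x - ev2 T Y W x := by
  simp only [ev2, Pi.sub_apply, mul_sub, sum_sub_distrib]

lemma differentiableAt_comp1 (hψ : DifferentiableAt ℝ ψ x) (hφ : DifferentiableAt ℝ φ x) :
    DifferentiableAt ℝ (comp1 ψ φ) x :=
  differentiableAt_pi'' fun j => differentiableAt_pi'' fun k =>
    DifferentiableAt.fun_sum fun n _ => (hψ.apply₂ n k).fun_mul (hφ.apply₂ n j)

lemma lie2_appT_sub_lie2_comp1 (hφ : DifferentiableAt ℝ φ x) (hψ : DifferentiableAt ℝ ψ x)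
    (hX : DifferentiableAt ℝ X x) (hY : DifferentiableAt ℝ Y x) (hZ : DifferentiableAt ℝ Z x) :
    lie2 (appT φ X) ψ Y Z x - lie2 X (comp1 ψ φ) Y Z x
      = ev3 (lieDiffC φ ψ) X Y Z x + ev2 (comp2 ψ φ - comp1 ψ φ) Y (covDeriv Z X) x := by
  rw [lie2_eq_ev2_lie2C _ hψ hY hZ, lie2_eq_ev2_lie2C _ (differentiableAt_comp1 hψ hφ) hY hZ,
    ← ev2_sub_left]
  simp only [ev2, Pi.sub_apply, lie2C_appT_sub_lie2C_comp1 hφ hψ hX, ev3, covDeriv, Xdot,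
    add_mul, sum_add_distrib, sum_mul, mul_sum]
  congr 1
  · exact (sum_comm_cycle.trans sum_comm_cycle).symm
  · exact sum_congr rfl fun _ _ => sum_comm.trans <|
      sum_congr rfl fun _ _ => sum_congr rfl fun _ _ => by ring

end Assembly

lemma Phi1_eq_ev3_sub_ev3 {φ ψ : T02 m} {X Y Z : VF m} {x : Pt m}
    (hφ : DifferentiableAt ℝ φ x) (hψ : DifferentiableAt ℝ ψ x) (hX : DifferentiableAt ℝ X x)
    (hY : DifferentiableAt ℝ Y x) (hZ : DifferentiableAt ℝ Z x) :
    Phi1 φ ψ X Y Z x = ev3 (lieDiffC φ ψ) X Y Z x - ev3 (lieDiffC φ ψ) Z Y X x := by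
  rw [Phi1, lie2_appT_sub_lie2_comp1 hφ hψ hX hY hZ, lie2_appT_sub_lie2_comp1 hφ hψ hZ hY hX,
    lieB_eq_covDeriv_sub, ev2_sub_left, ev2_sub_left, ev2_sub_right, ev2_sub_right]
  ring

lemma ev3_sub_ev3_swap (L : T3 m) (X Y Z : VF m) (x : Pt m) :
    ev3 L X Y Z x - ev3 L Z Y X x
      = ∑ i, ∑ j, ∑ k, (L x i j k - L x k j i) * X x i * Y x j * Z x k := by
  simp only [ev3, sub_mul, sum_sub_distrib]
  congr 1
  rw [sum_comm_cycle]
  exact sum_congr rfl fun _ _ => sum_comm.trans <|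
    sum_congr rfl fun _ _ => sum_congr rfl fun _ _ => by ring

lemma Phi1C_eq_lieDiffC_sub (φ ψ : T02 m) (x : Pt m) (i j k : Fin m) :
    Phi1C φ ψ x i j k = lieDiffC φ ψ x i j k - lieDiffC φ ψ x k j i := by
  simp only [Phi1C, lieDiffC, ← sum_sub_distrib]
  exact sum_congr rfl fun _ _ => by ring

/-- Theorem 3.4: in local coordinates,
`Φ₁(φ,ψ)(X,Y,Z) = Φ₁_{ijk} X^i Y^j Z^k`. -/
theorem stmt14 (m : ℕ) (φ ψ : T02 m)
    (hφ : ContDiff ℝ (⊤ : ℕ∞) φ) (hψ : ContDiff ℝ (⊤ : ℕ∞) ψ)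
    (X Y Z : VF m) (hX : ContDiff ℝ (⊤ : ℕ∞) X) (hY : ContDiff ℝ (⊤ : ℕ∞) Y)
    (hZ : ContDiff ℝ (⊤ : ℕ∞) Z) :
    ∀ x : Pt m,
      Phi1 φ ψ X Y Z x
        = ∑ i, ∑ j, ∑ k, Phi1C φ ψ x i j k * X x i * Y x j * Z x k := by
  intro x
  simp only [Phi1C_eq_lieDiffC_sub]
  rw [← ev3_sub_ev3_swap]
  exact Phi1_eq_ev3_sub_ev3 (hφ.differentiable (by simp) x) (hψ.differentiable (by simp) x)
    (hX.differentiable (by simp) x) (hY.differentiable (by simp) x) (hZ.differentiable (by simp) x)
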